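/- arXiv:1503.01643 — 7 statements merged into one kernel-verified Lean document; each statement's English description precedes it below -/
import Mathlib

section
/- For any prime power v ≡ 3 (mod 4), the quadratic residues in GF(v) form a (v, (v−1)/2, (v−3)/4) difference set (Paley difference set) in the additive group of GF(v). -/
/-!
Since `-1` is a nonsquare when `v ≡ 3 (mod 4)`, exactly one of `x`, `-x` is a square for `x ≠ 0`,
so the nonzero squares `D` have `(v - 1) / 2` elements. The number of representations of `g` as a
difference of two elements of `D` is unchanged when `g` is multiplied by a nonzero square (which
permutes `D`) and when `g` is negated (swap the two elements), hence it is a constant `λ` on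
`g ≠ 0`. Counting all pairs of `D × D` by their difference gives `k + (v - 1) λ = k²`, so
`λ = (v - 3) / 4`.
-/

open Finset Pointwise

namespace Finset

variable {G : Type*} [AddGroup G] [DecidableEq G]

lemma addConvolution_neg_self_zero (A : Finset G) : A.addConvolution (-A) 0 = #A := by
  simp [← card_inter_vadd_neg]

lemma sum_addConvolution [Fintype G] (A B : Finset G) :
    ∑ x, A.addConvolution B x = #A * #B := by
  rw [← card_product]
  exact (card_eq_sum_card_fiberwise fun _ _ ↦ mem_univ _).symm

lemma smul_finset_addConvolution_smul_finset {α : Type*} [Group α] [DistribMulAction α G]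
    (a : α) (A B : Finset G) (x : G) :
    (a • A).addConvolution (a • B) (a • x) = A.addConvolution B x := by
  symm
  refine card_equiv ((MulAction.toPerm a).prodCongr (MulAction.toPerm a)) fun p ↦ ?_
  simp [smul_mem_smul_finset_iff, ← smul_add]

lemma card_add_mul_eq_card_mul_card_of_addConvolution_eq [Fintype G] (D : Finset G) (l : ℕ)
    (hD : ∀ g ≠ 0, D.addConvolution (-D) g = l) :
    #D + (Fintype.card G - 1) * l = #D * #D := by
  have h := sum_addConvolution D (-D)
  rwa [← add_sum_erase _ _ (mem_univ 0), addConvolution_neg_self_zero,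
    sum_congr rfl fun g hg ↦ hD g (ne_of_mem_erase hg), sum_const, card_erase_of_mem (mem_univ 0),
    card_univ, smul_eq_mul, card_neg] at h

end Finset

namespace FiniteField

variable {F : Type*} [Field F] [Fintype F] [DecidableEq F]

lemma isSquare_neg_iff_not_isSquare (hF : ¬IsSquare (-1 : F)) {x : F} (hx : x ≠ 0) :
    IsSquare (-x) ↔ ¬IsSquare x := by
  rw [← quadraticChar_one_iff_isSquare (neg_ne_zero.mpr hx), ← quadraticChar_one_iff_isSquare hx,
    neg_eq_neg_one_mul, map_mul, quadraticChar_neg_one_iff_not_isSquare.mpr hF]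
  rcases quadraticChar_dichotomy hx with h | h <;> simp [h]

variable (F) in
def nonzeroSquares : Finset F := univ.filter fun x ↦ x ≠ 0 ∧ IsSquare x

lemma two_mul_card_nonzeroSquares (hF : ¬IsSquare (-1 : F)) :
    2 * #(nonzeroSquares F) = Fintype.card F - 1 := by
  have hneg : #(nonzeroSquares F) = #{x : F | x ≠ 0 ∧ ¬IsSquare x} := by
    refine (card_equiv (Equiv.neg F) fun x ↦ ?_).symm
    simp only [nonzeroSquares, mem_filter, mem_univ, true_and, Equiv.neg_apply, neg_ne_zero]
    exact and_congr_right fun hx ↦ (isSquare_neg_iff_not_isSquare hF hx).symm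
  have hsplit := card_filter_add_card_filter_not (s := {x : F | x ≠ 0}) IsSquare
  rw [filter_filter, filter_filter, filter_ne', card_erase_of_mem (mem_univ 0), card_univ] at hsplit
  rw [two_mul]
  nth_rw 2 [hneg]
  exact hsplit

lemma smul_nonzeroSquares {u : Fˣ} (hu : IsSquare (u : F)) :
    u • nonzeroSquares F = nonzeroSquares F := by
  refine eq_of_subset_of_card_le ?_ (card_smul_finset u _).ge
  intro y hy
  obtain ⟨x, hx, rfl⟩ := mem_smul_finset.mp hy
  simp only [nonzeroSquares, mem_filter, mem_univ, true_and, Units.smul_def, smul_eq_mul] at hx ⊢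
  exact ⟨mul_ne_zero u.ne_zero hx.1, hu.mul hx.2⟩

lemma addConvolution_nonzeroSquares (hF : ¬IsSquare (-1 : F)) {g : F} (hg : g ≠ 0) :
    (nonzeroSquares F).addConvolution (-nonzeroSquares F) g =
      (nonzeroSquares F).addConvolution (-nonzeroSquares F) 1 := by
  set S := nonzeroSquares F
  have hsq : ∀ c : F, c ≠ 0 → IsSquare c → S.addConvolution (-S) c = S.addConvolution (-S) 1 := by
    intro c hc0 hc
    have h := smul_finset_addConvolution_smul_finset (Units.mk0 c hc0) S (-S) 1
    rwa [smul_finset_neg, smul_nonzeroSquares hc, Units.smul_mk0, smul_eq_mul, mul_one] at h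
  by_cases hg' : IsSquare g
  · exact hsq g hg hg'
  · rw [← neg_neg g, addConvolution_neg, neg_neg]
    exact hsq (-g) (neg_ne_zero.mpr hg) ((isSquare_neg_iff_not_isSquare hF hg).mpr hg')

end FiniteField

open FiniteField in
/-- For any prime power v ≡ 3 (mod 4), the quadratic residues of GF(v) form a
(v, (v−1)/2, (v−3)/4) difference set in the additive group of GF(v). -/
theorem paley_difference_set (v : ℕ) (F : Type*) [Field F] [Fintype F] [DecidableEq F]
    (hcard : Fintype.card F = v) (hv : v % 4 = 3) :
    (Finset.univ.filter (fun x : F => x ≠ 0 ∧ IsSquare x)).card = (v - 1) / 2 ∧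
    ∀ g : F, g ≠ 0 →
      (((Finset.univ.filter (fun x : F => x ≠ 0 ∧ IsSquare x)) ×ˢ
        (Finset.univ.filter (fun x : F => x ≠ 0 ∧ IsSquare x))).filter
          (fun p => p.1 - p.2 = g)).card = (v - 3) / 4 := by
  change #(nonzeroSquares F) = _ ∧ ∀ g : F, g ≠ 0 →
    #{p ∈ nonzeroSquares F ×ˢ nonzeroSquares F | p.1 - p.2 = g} = _
  have hF : ¬IsSquare (-1 : F) := isSquare_neg_one_iff.not_left.mpr (hcard ▸ hv)
  have hk := two_mul_card_nonzeroSquares hF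
  set S := nonzeroSquares F
  have hconst : ∀ g : F, g ≠ 0 → S.addConvolution (-S) g = S.addConvolution (-S) 1 :=
    fun _ ↦ addConvolution_nonzeroSquares hF
  have hcount := card_add_mul_eq_card_mul_card_of_addConvolution_eq _ _ hconst
  refine ⟨by omega, fun g hg ↦ ?_⟩
  rw [card_sub_eq, hconst g hg]
  obtain ⟨m, rfl⟩ : ∃ m, v = 4 * m + 3 := ⟨v / 4, by omega⟩
  have hkm : #S = 2 * m + 1 := by omega
  rw [hkm, hcard, show 4 * m + 3 - 1 = (4 * m + 2) by omega] at hcount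
  refine Nat.eq_of_mul_eq_mul_left (show 0 < 4 * m + 2 by omega) ?_
  rw [show (4 * m + 3 - 3) / 4 = m by omega]
  linarith
end

section
/- For a prime power v ≡ 3 (mod 4), the v×v matrix over GF(v) whose (x,y)-entry is 1 if y−x is a nonzero square, 2 if y=x, and 3 otherwise, is a 3-mosaic: colours 1 and 3 each define 2-(v,(v−1)/2,(v−3)/4) designs and colour 2 defines the trivial 2-(v,1,0) design. -/
/-!
With `χ` the quadratic character of `F`, the indicator of `χ t = ε` (`ε = ±1`) is
`(χ t ^ 2 + ε χ t) / 2`, so block sizes and pair multiplicities of the development become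
character sums. All of them are elementary except `∑ y, χ (y - a) χ (y - b) = -1` for `a ≠ b`,
which is the Jacobi sum `J(χ, χ⁻¹) = -χ(-1)` after an affine change of variables. When
`#F ≡ 3 (mod 4)` we have `χ (-1) = -1`, so `χ (a - b) = -χ (b - a)` and the two terms linear in `ε`
cancel, leaving the multiplicity `(#F - 3) / 4` for both `ε = 1` and `ε = -1`.
-/

open Finset

/-- The translates `{x | P (y - x)}`, `y : F`, are the blocks of a `2-(#F, k, l)` design. -/
def IsDevelopmentTwoDesign {F : Type*} [Ring F] [Fintype F] [DecidableEq F] (P : F → Prop)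
    [DecidablePred P] (k l : ℕ) : Prop :=
  (∀ y : F, #{x | P (y - x)} = k) ∧
    ∀ T : Finset F, #T = 2 → #{y | T ⊆ univ.filter fun x => P (y - x)} = l

section Development

variable {F : Type*} [Ring F] [Fintype F] [DecidableEq F]

theorem isDevelopmentTwoDesign_congr {P Q : F → Prop} [DecidablePred P] [DecidablePred Q]
    (h : ∀ t, P t ↔ Q t) {k l : ℕ} :
    IsDevelopmentTwoDesign P k l ↔ IsDevelopmentTwoDesign Q k l := by
  simp only [IsDevelopmentTwoDesign, h]

theorem isDevelopmentTwoDesign_eq_zero : IsDevelopmentTwoDesign (fun t : F => t = 0) 1 0 := by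
  have hblock : ∀ y : F, (univ.filter fun x : F => y - x = 0) = {y} := fun y => by
    ext x
    simp [sub_eq_zero, eq_comm]
  refine ⟨fun y => by rw [hblock, card_singleton], fun T hT => ?_⟩
  rw [card_eq_zero, filter_eq_empty_iff]
  intro y _ hTy
  have := card_le_card (hTy.trans (hblock y).subset)
  rw [hT, card_singleton] at this
  omega

end Development

section QuadraticChar

variable {F : Type*} [Field F] [Fintype F]

theorem ringChar_ne_two_of_card_mod_four_eq_three (hF : Fintype.card F % 4 = 3) :
    ringChar F ≠ 2 := fun h => by
  have := FiniteField.even_card_of_char_two h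
  omega

variable [DecidableEq F]

local notation "χ" => quadraticChar F

theorem ne_zero_and_isSquare_iff_quadraticChar_eq_one {t : F} :
    t ≠ 0 ∧ IsSquare t ↔ χ t = 1 :=
  ⟨fun ⟨ht, hs⟩ => (quadraticChar_one_iff_isSquare ht).mpr hs,
    fun h => have ht : t ≠ 0 := fun h0 => by simp [h0] at h
      ⟨ht, (quadraticChar_one_iff_isSquare ht).mp h⟩⟩

theorem ne_zero_and_not_isSquare_iff_quadraticChar_eq_neg_one {t : F} :
    t ≠ 0 ∧ ¬IsSquare t ↔ χ t = -1 := by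
  rw [quadraticChar_neg_one_iff_not_isSquare, and_iff_right_iff_imp]
  rintro hs rfl
  exact hs .zero

theorem quadraticChar_neg_one_of_card_mod_four_eq_three (hF : Fintype.card F % 4 = 3) :
    χ (-1) = -1 :=
  quadraticChar_neg_one_iff_not_isSquare.mpr fun h => FiniteField.isSquare_neg_one_iff.mp h hF

theorem quadraticChar_sub_comm_of_card_mod_four_eq_three (hF : Fintype.card F % 4 = 3) (a b : F) :
    χ (a - b) = -χ (b - a) := by
  rw [← neg_sub, ← neg_one_mul, map_mul, quadraticChar_neg_one_of_card_mod_four_eq_three hF,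
    neg_one_mul]

theorem sum_mul_quadraticChar_sub_sq (f : F → ℤ) (b : F) :
    ∑ y, f y * χ (y - b) ^ 2 = ∑ y, f y - f b := by
  have h : ∀ y, f y * χ (y - b) ^ 2 = f y - if y = b then f b else 0 := fun y => by
    by_cases hy : y = b
    · simp [hy]
    · rw [quadraticChar_sq_one (sub_ne_zero.mpr hy), if_neg hy, mul_one, sub_zero]
  rw [sum_congr rfl fun y _ => h y, sum_sub_distrib, sum_ite_eq']
  simp

theorem sum_quadraticChar_sq : ∑ t : F, χ t ^ 2 = Fintype.card F - 1 := by
  simpa using sum_mul_quadraticChar_sub_sq (fun _ => (1 : ℤ)) (0 : F)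

theorem sum_quadraticChar_sub (hF : ringChar F ≠ 2) (a : F) : ∑ y, χ (y - a) = 0 :=
  (Equiv.sum_comp (Equiv.subRight a) fun t => χ t).trans (quadraticChar_sum_zero hF)

theorem sum_quadraticChar_sub_sq (a : F) : ∑ y, χ (y - a) ^ 2 = Fintype.card F - 1 :=
  (Equiv.sum_comp (Equiv.subRight a) fun t => χ t ^ 2).trans sum_quadraticChar_sq

theorem sum_quadraticChar_sub_mul_quadraticChar_sub (hF : ringChar F ≠ 2) {a b : F}
    (hab : a ≠ b) : ∑ y, χ (y - a) * χ (y - b) = -1 := by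
  have hc : b - a ≠ 0 := sub_ne_zero.mpr hab.symm
  have hJ : jacobiSum χ χ = -χ (-1) := by
    simpa only [(quadraticChar_isQuadratic F).inv] using
      jacobiSum_nontrivial_inv (quadraticChar_ne_one hF)
  rw [← Equiv.sum_comp (Equiv.addLeft a), ← Equiv.sum_comp (Equiv.mulLeft₀ (b - a) hc)]
  calc ∑ x, χ (a + (b - a) * x - a) * χ (a + (b - a) * x - b)
      = ∑ x, χ (-1) * χ (b - a) ^ 2 * (χ x * χ (1 - x)) := sum_congr rfl fun x _ => by
        rw [show a + (b - a) * x - a = (b - a) * x by ring,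
          show a + (b - a) * x - b = -1 * (b - a) * (1 - x) by ring]
        simp only [map_mul]
        ring
    _ = -χ (-1) ^ 2 := by
        rw [← mul_sum, quadraticChar_sq_one hc, mul_one]
        change χ (-1) * jacobiSum χ χ = _
        rw [hJ]
        ring
    _ = -1 := by rw [quadraticChar_sq_one (neg_ne_zero.mpr one_ne_zero)]

theorem two_mul_ite_eq_sign {c ε : ℤ} (hc : c = 0 ∨ c = 1 ∨ c = -1) (hε : ε = 1 ∨ ε = -1) :
    2 * (if c = ε then 1 else 0) = c ^ 2 + ε * c := by
  rcases hc with rfl | rfl | rfl <;> rcases hε with rfl | rfl <;> norm_num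

variable {ε : ℤ}

theorem two_mul_card_filter_quadraticChar_sub_eq (hF : ringChar F ≠ 2) (hε : ε = 1 ∨ ε = -1)
    (y : F) : (2 * #{x | χ (y - x) = ε} : ℤ) = Fintype.card F - 1 := by
  calc (2 * #{x | χ (y - x) = ε} : ℤ)
      = ∑ x, (χ (y - x) ^ 2 + ε * χ (y - x)) := by
        rw [natCast_card_filter, mul_sum]
        exact sum_congr rfl fun x _ => two_mul_ite_eq_sign (quadraticChar_isQuadratic F _) hε
    _ = ∑ t, (χ t ^ 2 + ε * χ t) := (Equiv.subLeft y).sum_comp fun t => χ t ^ 2 + ε * χ t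
    _ = Fintype.card F - 1 := by
        rw [sum_add_distrib, ← mul_sum, quadraticChar_sum_zero hF, sum_quadraticChar_sq]
        ring

theorem four_mul_card_filter_quadraticChar_sub_eq_and (hF : Fintype.card F % 4 = 3)
    (hε : ε = 1 ∨ ε = -1) {a b : F} (hab : a ≠ b) :
    (4 * #{y | χ (y - a) = ε ∧ χ (y - b) = ε} : ℤ) = Fintype.card F - 3 := by
  have hF' := ringChar_ne_two_of_card_mod_four_eq_three hF
  have hε2 : ε ^ 2 = 1 := by rcases hε with rfl | rfl <;> norm_num
  have hind : ∀ t : F, 2 * (if χ t = ε then 1 else 0) = χ t ^ 2 + ε * χ t := fun t =>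
    two_mul_ite_eq_sign (quadraticChar_isQuadratic F t) hε
  calc (4 * #{y | χ (y - a) = ε ∧ χ (y - b) = ε} : ℤ)
      = ∑ y, (χ (y - a) ^ 2 + ε * χ (y - a)) * (χ (y - b) ^ 2 + ε * χ (y - b)) := by
        rw [natCast_card_filter, mul_sum]
        refine sum_congr rfl fun y _ => ?_
        rw [← hind, ← hind]
        split_ifs <;> tauto
    _ = ∑ y, χ (y - a) ^ 2 * χ (y - b) ^ 2
          + ε * (∑ y, χ (y - a) * χ (y - b) ^ 2 + ∑ y, χ (y - b) * χ (y - a) ^ 2)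
          + ε ^ 2 * ∑ y, χ (y - a) * χ (y - b) := by
        simp only [mul_add, mul_sum, ← sum_add_distrib]
        exact sum_congr rfl fun y _ => by ring
    _ = Fintype.card F - 3 := by
        rw [sum_mul_quadraticChar_sub_sq, sum_mul_quadraticChar_sub_sq,
          sum_mul_quadraticChar_sub_sq, quadraticChar_sq_one (sub_ne_zero.mpr hab.symm),
          sum_quadraticChar_sub_mul_quadraticChar_sub hF' hab,
          quadraticChar_sub_comm_of_card_mod_four_eq_three hF a b, hε2, sum_quadraticChar_sub_sq,
          sum_quadraticChar_sub hF', sum_quadraticChar_sub hF']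
        ring

theorem isDevelopmentTwoDesign_quadraticChar (hF : Fintype.card F % 4 = 3)
    (hε : ε = 1 ∨ ε = -1) :
    IsDevelopmentTwoDesign (fun t : F => χ t = ε) ((Fintype.card F - 1) / 2)
      ((Fintype.card F - 3) / 4) := by
  refine ⟨fun y => ?_, fun T hT => ?_⟩ <;> dsimp only
  · have := two_mul_card_filter_quadraticChar_sub_eq
      (ringChar_ne_two_of_card_mod_four_eq_three hF) hε y
    omega
  · obtain ⟨a, b, hab, rfl⟩ := card_eq_two.mp hT
    simp only [insert_subset_iff, singleton_subset_iff, mem_filter, mem_univ, true_and]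
    have := four_mul_card_filter_quadraticChar_sub_eq_and hF hε hab
    omega

end QuadraticChar

/-- For a prime power v ≡ 3 (mod 4), the v×v matrix whose (x,y)-entry is
1 if y−x is a nonzero square, 2 if y=x, and 3 otherwise, is a 3-mosaic:
colours 1 and 3 each define 2-(v,(v−1)/2,(v−3)/4) designs and colour 2 the
trivial 2-(v,1,0) design. -/
theorem paley_three_mosaic (v : ℕ) (F : Type*) [Field F] [Fintype F] [DecidableEq F]
    (hcard : Fintype.card F = v) (hv : v % 4 = 3) :
    -- colour 1 : entries with y − x a nonzero square form a 2-(v,(v−1)/2,(v−3)/4) design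
    ((∀ y : F, (Finset.univ.filter (fun x : F => y - x ≠ 0 ∧ IsSquare (y - x))).card
        = (v - 1) / 2) ∧
      ∀ T : Finset F, T.card = 2 →
        (Finset.univ.filter (fun y : F =>
          T ⊆ Finset.univ.filter (fun x : F => y - x ≠ 0 ∧ IsSquare (y - x)))).card
          = (v - 3) / 4) ∧
    -- colour 3 : entries with y − x a nonsquare form a 2-(v,(v−1)/2,(v−3)/4) design
    ((∀ y : F, (Finset.univ.filter (fun x : F => y - x ≠ 0 ∧ ¬ IsSquare (y - x))).card
        = (v - 1) / 2) ∧
      ∀ T : Finset F, T.card = 2 →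
        (Finset.univ.filter (fun y : F =>
          T ⊆ Finset.univ.filter (fun x : F => y - x ≠ 0 ∧ ¬ IsSquare (y - x)))).card
          = (v - 3) / 4) ∧
    -- colour 2 : the diagonal forms the trivial 2-(v,1,0) design
    ((∀ y : F, (Finset.univ.filter (fun x : F => y - x = 0)).card = 1) ∧
      ∀ T : Finset F, T.card = 2 →
        (Finset.univ.filter (fun y : F =>
          T ⊆ Finset.univ.filter (fun x : F => y - x = 0))).card = 0) := by
  subst hcard
  refine ⟨?_, ?_, isDevelopmentTwoDesign_eq_zero⟩
  · exact (isDevelopmentTwoDesign_congr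
      fun _ => ne_zero_and_isSquare_iff_quadraticChar_eq_one).mpr
      (isDevelopmentTwoDesign_quadraticChar hv (.inl rfl))
  · exact (isDevelopmentTwoDesign_congr
      fun _ => ne_zero_and_not_isSquare_iff_quadraticChar_eq_neg_one).mpr
      (isDevelopmentTwoDesign_quadraticChar hv (.inr rfl))
end

section
/- Let F = GF(q) with addition table A and multiplication table M (both q×q matrices over F). Then the q² × (q²+q) matrix [M ⊗ J_{q,q} + J_{q,q} ⊗ A | A ⊗ J_{q,1}] is a q-mosaic in which each element of F appears exactly q+1 times in each row and exactly q times in each column. -/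
/-!
Every count is a count of solutions of an equation `h a b = e` over a product, where `h a` is
bijective in one coordinate once the other is fixed (an entry is a translate `· + c` of that
coordinate). Each fibre over the free coordinate thus contains exactly one solution. The last
`q` columns contribute the extra `+ 1` to every row.
-/

open Finset Function

theorem card_filter_apply_eq_of_bijective {β γ : Type*} [Fintype β] [DecidableEq γ]
    {f : β → γ} (hf : Bijective f) (e : γ) : #{b | f b = e} = 1 :=
  card_eq_one.mpr ⟨(Equiv.ofBijective f hf).symm e, by ext b; simp [Equiv.eq_symm_apply]⟩

theorem card_filter_disjSum {α β : Type*} [Fintype α] [Fintype β] (P : α ⊕ β → Prop)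
    [DecidablePred P] : #{c | P c} = #{a | P (.inl a)} + #{b | P (.inr b)} := by
  simp only [card_filter, Fintype.sum_sum_type]

section
variable {α β γ : Type*} [Fintype α] [Fintype β] [DecidableEq γ] {h : α → β → γ}

theorem card_filter_prod_eq_card_left_of_bijective (hh : ∀ a, Bijective (h a)) (e : γ) :
    #{ab : α × β | h ab.1 ab.2 = e} = Fintype.card α := by
  rw [card_filter, Fintype.sum_prod_type]
  simp only [← card_filter, card_filter_apply_eq_of_bijective (hh _), sum_const, smul_eq_mul,
    mul_one, card_univ]

theorem card_filter_prod_eq_card_right_of_bijective (hh : ∀ b, Bijective (h · b)) (e : γ) :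
    #{ab : α × β | h ab.1 ab.2 = e} = Fintype.card β := by
  rw [card_filter, Fintype.sum_prod_type_right]
  simp only [← card_filter, card_filter_apply_eq_of_bijective (hh _), sum_const, smul_eq_mul,
    mul_one, card_univ]

end

/-- For F = GF(q) with addition table A and multiplication table M, the
q² × (q²+q) matrix [M ⊗ J_{q,q} + J_{q,q} ⊗ A | A ⊗ J_{q,1}] is a q-mosaic in
which each element of F appears exactly q+1 times in each row and exactly q
times in each column.  Rows are indexed by (p₁,p₂) ∈ F², the first q² columns
by (x,y) ∈ F² with entry x·p₁ + (y + p₂), and the last q columns by x ∈ F with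
entry x + p₁. -/
theorem field_mosaic_row_col_counts (F : Type*) [Field F] [Fintype F] [DecidableEq F] :
    let Mat : F × F → (F × F) ⊕ F → F := fun p c =>
      Sum.elim (fun xy : F × F => xy.1 * p.1 + (xy.2 + p.2)) (fun x : F => x + p.1) c
    (∀ (e : F) (p : F × F),
      (Finset.univ.filter (fun c : (F × F) ⊕ F => Mat p c = e)).card
        = Fintype.card F + 1) ∧
    (∀ (e : F) (c : (F × F) ⊕ F),
      (Finset.univ.filter (fun p : F × F => Mat p c = e)).card = Fintype.card F) := by
  intro Mat
  refine ⟨fun e p => ?_, fun e c => ?_⟩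
  · rw [card_filter_disjSum]
    exact congrArg₂ (· + ·)
      (card_filter_prod_eq_card_left_of_bijective (h := fun x y => x * p.1 + (y + p.2))
        (fun x => ((Equiv.addRight p.2).trans (Equiv.addLeft (x * p.1))).bijective) e)
      (card_filter_apply_eq_of_bijective (Equiv.addRight p.1).bijective e)
  · cases c with
    | inl xy =>
      exact card_filter_prod_eq_card_left_of_bijective
        (h := fun p₁ p₂ => xy.1 * p₁ + (xy.2 + p₂))
        (fun p₁ => ((Equiv.addLeft xy.2).trans (Equiv.addLeft (xy.1 * p₁))).bijective) e
    | inr x =>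
      exact card_filter_prod_eq_card_right_of_bijective (h := fun p₁ _ => x + p₁)
        (fun _ => (Equiv.addLeft x).bijective) e
end

section
/- Let F = GF(q). For each c ∈ F, the set of positions (p, (x,y)) in the q²×q² array indexed by p=(p1,p2) ∈ F² and columns (x,y) ∈ F², where x·p1 + y + p2 = c (interpreting colour entry M_{x p1} + A_{y p2}), has the property that the colour-c class restricted to any column is a block of size q, and these blocks together with the parallel class {lines p1 = const} form copies of the affine plane AG(2,q); in particular each colour class of the full matrix [M ⊗ J + J ⊗ A | A ⊗ J_{q,1}] is a 2-(q², q, 1) design. -/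
/-- Each colour class of the matrix [M ⊗ J + J ⊗ A | A ⊗ J_{q,1}] over F = GF(q)
is a 2-(q², q, 1) design (a copy of the affine plane AG(2,q)): for each colour
c ∈ F, every column cuts out a block of size q, and every pair of points of F²
lies in exactly one such block. -/
theorem field_mosaic_colour_classes_affine (F : Type*) [Field F] [Fintype F] [DecidableEq F] :
    let Mat : F × F → (F × F) ⊕ F → F := fun p col =>
      Sum.elim (fun xy : F × F => xy.1 * p.1 + (xy.2 + p.2)) (fun x : F => x + p.1) col
    ∀ c : F,
      -- each column's colour-c class is a block of size q
      (∀ col : (F × F) ⊕ F,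
        (Finset.univ.filter (fun p : F × F => Mat p col = c)).card = Fintype.card F) ∧
      -- every 2-subset of the q² points lies in exactly one block, i.e. the
      -- colour class is a 2-(q², q, 1) design
      (∀ T : Finset (F × F), T.card = 2 →
        (Finset.univ.filter (fun col : (F × F) ⊕ F =>
          T ⊆ Finset.univ.filter (fun p : F × F => Mat p col = c))).card = 1) := by
  intro Mat c
  have hmem : ∀ (col : (F × F) ⊕ F) (p : F × F),
      p ∈ Finset.univ.filter (fun p : F × F => Mat p col = c) ↔ Mat p col = c := by
    intro col p
    simp
  constructor
  · intro col
    rw [← Finset.card_univ]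
    cases col with
    | inl xy =>
      refine Finset.card_bij' (fun p _ => p.1) (fun t _ => (t, c - xy.2 - xy.1 * t)) ?_ ?_ ?_ ?_
      · intro p hp
        exact Finset.mem_univ _
      · intro t _
        rw [hmem]
        show xy.1 * t + (xy.2 + (c - xy.2 - xy.1 * t)) = c
        ring
      · intro p hp
        rw [hmem] at hp
        have hp' : xy.1 * p.1 + (xy.2 + p.2) = c := hp
        have : p.2 = c - xy.2 - xy.1 * p.1 := by linear_combination hp'
        exact Prod.ext rfl this.symm
      · intro t _
        rfl
    | inr x =>
      refine Finset.card_bij' (fun p _ => p.2) (fun t _ => (c - x, t)) ?_ ?_ ?_ ?_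
      · intro p hp
        exact Finset.mem_univ _
      · intro t _
        rw [hmem]
        show x + (c - x) = c
        ring
      · intro p hp
        rw [hmem] at hp
        have hp' : x + p.1 = c := hp
        have : p.1 = c - x := by linear_combination hp'
        obtain ⟨p1, p2⟩ := p
        have h1 : p1 = c - x := this
        subst h1
        rfl
      · intro t _
        rfl
  · intro T hT
    obtain ⟨a, b, hab, rfl⟩ := Finset.card_eq_two.mp hT
    have hsub : ∀ col : (F × F) ⊕ F,
        ({a, b} : Finset (F × F)) ⊆ Finset.univ.filter (fun p : F × F => Mat p col = c)
          ↔ Mat a col = c ∧ Mat b col = c := by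
      intro col
      simp [Finset.insert_subset_iff]
    by_cases h : a.1 = b.1
    · have h2 : a.2 ≠ b.2 := fun h2 => hab (Prod.ext h h2)
      have heq : (Finset.univ.filter (fun col : (F × F) ⊕ F =>
          ({a, b} : Finset (F × F)) ⊆ Finset.univ.filter (fun p : F × F => Mat p col = c)))
          = {Sum.inr (c - a.1)} := by
        ext col
        simp only [Finset.mem_filter, Finset.mem_univ, true_and, hsub, Finset.mem_singleton]
        cases col with
        | inl xy =>
          constructor
          · rintro ⟨h1, h3⟩
            have h1' : xy.1 * a.1 + (xy.2 + a.2) = c := h1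
            have h3' : xy.1 * b.1 + (xy.2 + b.2) = c := h3
            exact absurd (by linear_combination h1' - h3' - xy.1 * h) h2
          · intro hc; exact absurd hc (by simp)
        | inr x =>
          rw [Sum.inr.injEq]
          constructor
          · rintro ⟨h1, _⟩
            have h1' : x + a.1 = c := h1
            linear_combination h1'
          · intro hx
            subst hx
            constructor
            · show (c - a.1) + a.1 = c; ring
            · show (c - a.1) + b.1 = c; linear_combination -h
      rw [heq, Finset.card_singleton]
    · set x0 : F := (b.2 - a.2) / (a.1 - b.1) with hx0
      have hne : a.1 - b.1 ≠ 0 := sub_ne_zero.mpr h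
      have hx0eq : x0 * (a.1 - b.1) = b.2 - a.2 := div_mul_cancel₀ _ hne
      have heq : (Finset.univ.filter (fun col : (F × F) ⊕ F =>
          ({a, b} : Finset (F × F)) ⊆ Finset.univ.filter (fun p : F × F => Mat p col = c)))
          = {Sum.inl (x0, c - a.2 - x0 * a.1)} := by
        ext col
        simp only [Finset.mem_filter, Finset.mem_univ, true_and, hsub, Finset.mem_singleton]
        cases col with
        | inl xy =>
          obtain ⟨x1, y1⟩ := xy
          rw [Sum.inl.injEq, Prod.ext_iff]
          constructor
          · rintro ⟨h1, h3⟩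
            have h1' : x1 * a.1 + (y1 + a.2) = c := h1
            have h3' : x1 * b.1 + (y1 + b.2) = c := h3
            have hx : x1 = x0 := by
              rw [hx0, eq_div_iff hne]
              linear_combination h1' - h3'
            refine ⟨hx, ?_⟩
            show y1 = c - a.2 - x0 * a.1
            rw [← hx]
            linear_combination h1'
          · rintro ⟨hx, hy⟩
            have hx' : x1 = x0 := hx
            have hy' : y1 = c - a.2 - x0 * a.1 := hy
            subst hx'
            subst hy'
            constructor
            · show x0 * a.1 + ((c - a.2 - x0 * a.1) + a.2) = c; ring
            · show x0 * b.1 + ((c - a.2 - x0 * a.1) + b.2) = c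
              linear_combination -hx0eq
        | inr x =>
          constructor
          · rintro ⟨h1, h3⟩
            have h1' : x + a.1 = c := h1
            have h3' : x + b.1 = c := h3
            exact absurd (by linear_combination h1' - h3') h
          · intro hc; exact absurd hc (by simp)
      rw [heq, Finset.card_singleton]
end

section
/- Let D be the v×b incidence matrix of a resolvable t-(v,k,λ) design with columns arranged by parallel classes (b = r·(v/k)), and let L be a latin square of order n = v/k with entries l_1,…,l_n. Then the matrix M = D·(I_r ⊗ L) is an n-mosaic: for each i, the colour class of l_i in M is the incidence matrix of a design isomorphic to the original resolvable design. -/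
/-- Latin-square mosaic construction from a resolvable design: if D is the
incidence matrix of a resolvable t-(v,k,λ) design, with blocks B (p,i) arranged
by parallel classes p ∈ Fin r (each class partitioning the points into n = v/k
blocks), and L is a latin square of order n, then in M = D·(I_r ⊗ L) each colour
class is the incidence matrix of a design isomorphic to the original: its block
in column (p,j) is B (p,i) for the unique i with L i j = l, and these blocks are
a permutation of the blocks of the original design. -/
theorem resolvable_latin_square_mosaic (v k t lam r n : ℕ)
    (B : Fin r × Fin n → Finset (Fin v))
    (hblock : ∀ pj, (B pj).card = k)
    (hdesign : ∀ T : Finset (Fin v), T.card = t →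
      (Finset.univ.filter (fun pj => T ⊆ B pj)).card = lam)
    (hres : ∀ (p : Fin r) (x : Fin v), ∃! i : Fin n, x ∈ B (p, i))
    (L : Fin n → Fin n → Fin n)
    (hLrow : ∀ i, Function.Bijective (L i))
    (hLcol : ∀ j, Function.Bijective (fun i => L i j)) :
    ∀ l : Fin n, ∃ e : (Fin r × Fin n) ≃ (Fin r × Fin n),
      ∀ (p : Fin r) (j : Fin n),
        Finset.univ.filter (fun x : Fin v => ∃ i, L i j = l ∧ x ∈ B (p, i))
          = B (e (p, j)) := by
  intro l
  -- σ j is the unique row i with L i j = l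
  set σ : Fin n → Fin n := fun j => (Equiv.ofBijective _ (hLcol j)).symm l with hσ
  have hσspec : ∀ j, L (σ j) j = l := by
    intro j
    exact (Equiv.ofBijective _ (hLcol j)).apply_symm_apply l
  have hσuniq : ∀ j i, L i j = l → i = σ j := by
    intro j i hi
    exact (hLcol j).1 (by simpa [hσspec j] using hi)
  have hσbij : Function.Bijective σ := by
    constructor
    · intro j1 j2 h
      apply (hLrow (σ j1)).1
      rw [hσspec j1, h, hσspec j2]
    · intro i
      obtain ⟨j, hj⟩ := (hLrow i).2 l
      exact ⟨j, (hσuniq j i hj).symm⟩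
  refine ⟨(Equiv.refl (Fin r)).prodCongr (Equiv.ofBijective σ hσbij), ?_⟩
  intro p j
  ext x
  simp only [Finset.mem_filter, Finset.mem_univ, true_and, Equiv.prodCongr_apply,
    Equiv.coe_refl, Prod.map, Equiv.ofBijective_apply, id]
  constructor
  · rintro ⟨i, hi, hx⟩
    rwa [hσuniq j i hi] at hx
  · intro hx
    exact ⟨σ j, hσspec j, hx⟩
end

section
/- If D is resolvable with parallel classes and L is a latin square of order v/k, then in M = D·(I_r ⊗ L) every column contains each label l_i on a set of rows forming exactly one block of a parallel class; in particular each label appears exactly k times in every column and the labels partition the rows of each column. -/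
/-- In M = D·(I_r ⊗ L) built from a resolvable design and a latin square, every
column contains each label l on a set of rows forming exactly one block of the
corresponding parallel class; in particular each label appears exactly k times
in every column, and the labels partition the rows of each column. -/
theorem resolvable_latin_square_columns (v k r n : ℕ)
    (B : Fin r × Fin n → Finset (Fin v))
    (hblock : ∀ pj, (B pj).card = k)
    (hres : ∀ (p : Fin r) (x : Fin v), ∃! i : Fin n, x ∈ B (p, i))
    (L : Fin n → Fin n → Fin n)
    (hLrow : ∀ i, Function.Bijective (L i))
    (hLcol : ∀ j, Function.Bijective (fun i => L i j)) :
    ∀ (p : Fin r) (j : Fin n) (l : Fin n),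
      -- the rows carrying label l in column (p,j) form one block of class p
      (∃ i : Fin n, L i j = l ∧
        Finset.univ.filter (fun x : Fin v => ∃ i', L i' j = l ∧ x ∈ B (p, i'))
          = B (p, i)) ∧
      -- each label appears exactly k times in the column
      (Finset.univ.filter (fun x : Fin v => ∃ i', L i' j = l ∧ x ∈ B (p, i'))).card = k ∧
      -- the labels partition the rows of the column
      (∀ x : Fin v, ∃! l' : Fin n, ∃ i', L i' j = l' ∧ x ∈ B (p, i')) := by
  intro p j l
  obtain ⟨i, hi⟩ := (hLcol j).2 l
  have hfilter : Finset.univ.filter (fun x : Fin v => ∃ i', L i' j = l ∧ x ∈ B (p, i'))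
      = B (p, i) := by
    ext x
    simp only [Finset.mem_filter, Finset.mem_univ, true_and]
    constructor
    · rintro ⟨i', hi', hx⟩
      have : i' = i := (hLcol j).1 (by simpa using hi'.trans hi.symm)
      rwa [this] at hx
    · intro hx
      exact ⟨i, hi, hx⟩
  refine ⟨⟨i, hi, hfilter⟩, by rw [hfilter]; exact hblock _, ?_⟩
  intro x
  obtain ⟨i', hi', hu⟩ := hres p x
  refine ⟨L i' j, ⟨i', rfl, hi'⟩, ?_⟩
  rintro l' ⟨i'', h1, h2⟩
  rw [hu i'' h2] at h1
  exact h1.symm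
end

section
/- If v ≡ 3 (mod 4) is a prime power and D ⊆ GF(v) is the set of nonzero squares, then the development {D + g : g ∈ GF(v)} is a 2-(v, (v−1)/2, (v−3)/4) design. -/
/-!
Since `v ≡ 3 (mod 4)`, `-1` is not a square, so `GF(v)ˣ` is the disjoint union of `D` and `-D`
and `|D| = (v - 1) / 2`. The number of ways to write `c ≠ 0` as a difference of two elements
of `D` does not change when `c` is multiplied by a nonzero square (which preserves `D`) or
negated, so it is a constant `λ`. Counting all ordered pairs of `D` gives `k² = k + (v - 1) λ`
with `k = |D|`, whence `λ = (v - 3) / 4`; and the translates `D + g` containing `{a, b}` are in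
bijection with the representations of `b - a`.
-/

open Finset

namespace Finset

section AddGroup

variable {G : Type*} [AddGroup G] [DecidableEq G]

def differenceCount (D : Finset G) (c : G) : ℕ := #{x ∈ D | x + c ∈ D}

variable (D : Finset G)

theorem differenceCount_zero : D.differenceCount 0 = #D := by
  simp [differenceCount]

theorem differenceCount_neg (c : G) : D.differenceCount (-c) = D.differenceCount c := by
  refine card_nbij' (· + -c) (· + c) ?_ ?_ ?_ ?_ <;> intro x hx <;> simp_all

theorem differenceCount_addEquiv_apply {e : G ≃+ G} (he : ∀ x, e x ∈ D ↔ x ∈ D) (c : G) :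
    D.differenceCount (e c) = D.differenceCount c := by
  refine card_nbij' e.symm e ?_ ?_ ?_ ?_ <;> intro x hx
  · simp only [coe_filter, Set.mem_ofPred_eq] at hx ⊢
    rw [← he (e.symm x), ← he (_ + c), map_add, e.apply_symm_apply]
    exact hx
  · simp only [coe_filter, Set.mem_ofPred_eq] at hx ⊢
    rw [← map_add, he, he]
    exact hx
  · simp
  · simp

theorem sum_differenceCount [Fintype G] : ∑ c, D.differenceCount c = #D * #D := by
  calc ∑ c, D.differenceCount c
      = ∑ x ∈ D, #{c | x + c ∈ D} := by
        simp only [differenceCount, card_filter]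
        exact sum_comm
    _ = ∑ x ∈ D, #D := by
        refine sum_congr rfl fun x _ => card_nbij' (x + ·) (-x + ·) ?_ ?_ ?_ ?_ <;>
          intro c hc <;> simp_all
    _ = #D * #D := by rw [sum_const, smul_eq_mul]

theorem card_mul_card_eq_of_differenceCount_eq [Fintype G] {l : ℕ}
    (h : ∀ c ≠ 0, D.differenceCount c = l) : #D * #D = #D + (Fintype.card G - 1) * l := by
  rw [← sum_differenceCount, ← add_sum_erase _ _ (mem_univ 0), differenceCount_zero,
    sum_congr rfl fun c hc => h c (ne_of_mem_erase hc), sum_const, smul_eq_mul,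
    card_erase_of_mem (mem_univ _), card_univ]

end AddGroup

theorem card_filter_pair_subset_image_add {G : Type*} [AddCommGroup G] [Fintype G]
    [DecidableEq G] (D : Finset G) (a b : G) :
    #{g | {a, b} ⊆ D.image (· + g)} = D.differenceCount (b - a) := by
  have mem_image_add : ∀ x g : G, x ∈ D.image (· + g) ↔ x - g ∈ D := fun x g => by
    simp [sub_eq_add_neg]
  refine card_nbij' (a - ·) (a - ·) ?_ ?_ ?_ ?_ <;> intro x hx
  · simp only [coe_filter, Set.mem_ofPred_eq, insert_subset_iff, singleton_subset_iff,
      mem_image_add, mem_univ, true_and] at hx ⊢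
    simpa using hx
  · simp only [coe_filter, Set.mem_ofPred_eq, insert_subset_iff, singleton_subset_iff,
      mem_image_add, mem_univ, true_and] at hx ⊢
    rw [show b - (a - x) = x + (b - a) by abel]
    simpa using hx
  · simp
  · simp

end Finset

section NonzeroSquares

variable {F : Type*} [Field F] [Fintype F] [DecidableEq F]

variable (F) in
def nonzeroSquares : Finset F := univ.filter (fun x : F => x ≠ 0 ∧ IsSquare x)

theorem mem_nonzeroSquares_iff_quadraticChar_eq_one {x : F} :
    x ∈ nonzeroSquares F ↔ quadraticChar F x = 1 := by
  by_cases hx : x = 0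
  · simp [nonzeroSquares, hx]
  · rw [quadraticChar_one_iff_isSquare hx]
    simp [nonzeroSquares, hx]

theorem mul_mem_nonzeroSquares_iff {s x : F} (hs : s ∈ nonzeroSquares F) :
    s * x ∈ nonzeroSquares F ↔ x ∈ nonzeroSquares F := by
  rw [mem_nonzeroSquares_iff_quadraticChar_eq_one] at hs
  rw [mem_nonzeroSquares_iff_quadraticChar_eq_one, mem_nonzeroSquares_iff_quadraticChar_eq_one,
    map_mul, hs, one_mul]

theorem neg_mem_nonzeroSquares_iff (h : ¬IsSquare (-1 : F)) {x : F} (hx : x ≠ 0) :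
    -x ∈ nonzeroSquares F ↔ x ∉ nonzeroSquares F := by
  have hχ : quadraticChar F (-1) = -1 := quadraticChar_neg_one_iff_not_isSquare.mpr h
  rw [mem_nonzeroSquares_iff_quadraticChar_eq_one, mem_nonzeroSquares_iff_quadraticChar_eq_one,
    neg_eq_neg_one_mul, map_mul, hχ, neg_one_mul, neg_eq_iff_eq_neg,
    quadraticChar_eq_neg_one_iff_not_one hx]

theorem two_mul_card_nonzeroSquares (h : ¬IsSquare (-1 : F)) :
    2 * #(nonzeroSquares F) = Fintype.card F - 1 := by
  have hnonsquares : #{x ∈ univ.erase 0 | x ∉ nonzeroSquares F} = #(nonzeroSquares F) := by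
    refine card_nbij' (- ·) (- ·) ?_ ?_ ?_ ?_ <;> intro x hx
    · simp only [coe_filter, mem_erase, Set.mem_ofPred_eq, mem_coe] at hx ⊢
      exact (neg_mem_nonzeroSquares_iff h hx.1.1).mpr hx.2
    · have hx0 : x ≠ 0 := by rintro rfl; simp [nonzeroSquares] at hx
      simp only [coe_filter, mem_erase, Set.mem_ofPred_eq, mem_coe, mem_univ, and_true,
        neg_ne_zero] at hx ⊢
      rw [neg_mem_nonzeroSquares_iff h hx0, not_not]
      exact ⟨hx0, hx⟩
    · simp
    · simp
  have hsquares : {x ∈ univ.erase (0 : F) | x ∈ nonzeroSquares F} = nonzeroSquares F := by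
    ext x; simp [nonzeroSquares]
  have hunits : #(univ.erase (0 : F)) = Fintype.card F - 1 := by
    rw [card_erase_of_mem (mem_univ _), card_univ]
  rw [← hunits, ← card_filter_add_card_filter_not (s := univ.erase 0) (· ∈ nonzeroSquares F),
    hnonsquares, hsquares]
  ring

theorem differenceCount_nonzeroSquares_eq (h : ¬IsSquare (-1 : F)) {c : F} (hc : c ≠ 0) :
    (nonzeroSquares F).differenceCount c = (nonzeroSquares F).differenceCount 1 := by
  have of_mem : ∀ s ∈ nonzeroSquares F,
      (nonzeroSquares F).differenceCount s = (nonzeroSquares F).differenceCount 1 := by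
    intro s hs
    have hs0 : s ≠ 0 := by rintro rfl; simp [nonzeroSquares] at hs
    have := differenceCount_addEquiv_apply _ (e := DistribMulAction.toAddEquiv₀ F s hs0)
      (fun x => mul_mem_nonzeroSquares_iff hs) 1
    rwa [show DistribMulAction.toAddEquiv₀ F s hs0 1 = s from mul_one s] at this
  by_cases hcD : c ∈ nonzeroSquares F
  · exact of_mem c hcD
  · rw [← differenceCount_neg, of_mem _ ((neg_mem_nonzeroSquares_iff h hc).mpr hcD)]

end NonzeroSquares

/-- If v ≡ 3 (mod 4) is a prime power and D ⊆ GF(v) is the set of nonzero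
squares, then the development {D + g : g ∈ GF(v)} is a 2-(v,(v−1)/2,(v−3)/4)
design. -/
theorem paley_development_design (v : ℕ) (F : Type*) [Field F] [Fintype F] [DecidableEq F]
    (hcard : Fintype.card F = v) (hv : v % 4 = 3) :
    let D : Finset F := Finset.univ.filter (fun x : F => x ≠ 0 ∧ IsSquare x)
    (∀ g : F, (D.image (· + g)).card = (v - 1) / 2) ∧
    (∀ T : Finset F, T.card = 2 →
      (Finset.univ.filter (fun g : F => T ⊆ D.image (· + g))).card = (v - 3) / 4) := by
  intro D
  rw [show D = nonzeroSquares F from rfl]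
  have hnonsquare : ¬IsSquare (-1 : F) := by
    rw [FiniteField.isSquare_neg_one_iff, hcard]
    omega
  have hcardD : 2 * #(nonzeroSquares F) = v - 1 := hcard ▸ two_mul_card_nonzeroSquares hnonsquare
  have hpairs := card_mul_card_eq_of_differenceCount_eq _
    fun c hc => differenceCount_nonzeroSquares_eq hnonsquare hc
  have hl : (nonzeroSquares F).differenceCount 1 = (v - 3) / 4 := by
    set k := #(nonzeroSquares F)
    set l := (nonzeroSquares F).differenceCount 1
    have hk : k * k = k * (2 * l + 1) := by rw [hcard] at hpairs; rw [hpairs, ← hcardD]; ring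
    have hk_odd : k = 2 * l + 1 := Nat.eq_of_mul_eq_mul_left (by omega) hk
    omega
  refine ⟨fun g => ?_, fun T hT => ?_⟩
  · rw [card_image_of_injective _ (add_left_injective g)]
    omega
  · obtain ⟨a, b, hab, rfl⟩ := card_eq_two.mp hT
    rw [card_filter_pair_subset_image_add,
      differenceCount_nonzeroSquares_eq hnonsquare (sub_ne_zero.mpr hab.symm), hl]
end
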